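/- arXiv:1101.5786 — 4 statements merged into one kernel-verified Lean document; each statement's English description precedes it below -/
import Mathlib

section
/- Let p > q ≥ 3 be coprime integers and let Γ be the convex hull of the set of integer points with strictly positive coordinates in the cone τ'' ⊂ ℝ² generated by (0,1) and (p,q). If (a₁,b₁) and (a₂,b₂) with a₁ ≤ a₂ are two vertices of a compact face of Γ, then 0 ≤ (b₂−b₁)/(a₂−a₁) < q/p. -/
/-!
Γ contains every lattice point of the cone with positive coordinates and lies in the convex
region `1 ≤ a, 1 ≤ b, q a ≤ p b`, so both ends `x₁, x₂` of the face are such lattice points.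
When `a₁ < a₂`, every point of the face has first coordinate at most `a₂`, with equality only
at `x₂`; in each bad case extremality puts another such point on the face. If `b₂ < b₁`, the
midpoint of the face is also the midpoint of `(a₂, b₁)` and `(a₁, b₂)`, both in Γ. If the
slope is at least `q / p`, the ray from `x₂` away from `x₁` crosses the segment from
`x₂ + (p, q)` to `x₂ + (0, 1)`, so `x₂` lies inside a segment of Γ reaching past `a = a₂`.
-/

section Segment

variable {𝕜 E F : Type*} [Field 𝕜] [LinearOrder 𝕜] [IsStrictOrderedRing 𝕜]
  [AddCommGroup E] [Module 𝕜 E] [AddCommGroup F] [Module 𝕜 F]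

lemma mem_openSegment_add_smul_sub {x y : E} {μ : 𝕜} (hμ : 0 < μ) :
    y ∈ openSegment 𝕜 x (y + μ • (y - x)) := by
  have : μ + 1 ≠ 0 := by positivity
  refine ⟨μ / (μ + 1), 1 / (μ + 1), by positivity, by positivity, by field_simp, ?_⟩
  match_scalars <;> field_simp <;> ring

lemma Prod.eq_right_of_mem_segment_of_fst_le {x y z : 𝕜 × F} (hz : z ∈ segment 𝕜 x y)
    (hxy : x.1 < y.1) (h : y.1 ≤ z.1) : z = y := by
  obtain ⟨s, t, hs, ht, hst, rfl⟩ := hz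
  obtain rfl : s = 1 - t := by linarith
  obtain rfl : t = 1 := by
    have : (1 - t) * x.1 + t * y.1 ≥ y.1 := by simpa using h
    nlinarith [mul_nonneg hs (sub_nonneg.2 hxy.le)]
  simp

end Segment

def latticeConePoints (p q : ℤ) : Set (ℝ × ℝ) :=
  {x : ℝ × ℝ | ∃ a b : ℤ, 0 < a ∧ 0 < b ∧ x = ((a : ℝ), (b : ℝ)) ∧
    ∃ lam mu : ℝ, 0 ≤ lam ∧ 0 ≤ mu ∧ (a : ℝ) = mu * p ∧ (b : ℝ) = lam + mu * q}

lemma exists_nonneg_cone_coeffs_iff {p q a b : ℝ} (hp : 0 < p) :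
    (∃ lam mu : ℝ, 0 ≤ lam ∧ 0 ≤ mu ∧ a = mu * p ∧ b = lam + mu * q) ↔
      0 ≤ a ∧ q * a ≤ p * b := by
  constructor
  · rintro ⟨lam, mu, hlam, hmu, rfl, rfl⟩
    exact ⟨by positivity, by nlinarith⟩
  · rintro ⟨ha, hab⟩
    refine ⟨b - q * a / p, a / p, ?_, by positivity, by field_simp, by field_simp; ring⟩
    rw [sub_nonneg, div_le_iff₀ hp]
    linarith

lemma convexHull_latticeConePoints_subset {p q : ℤ} (hp : 0 < p) :
    convexHull ℝ (latticeConePoints p q) ⊆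
      {x | 1 ≤ x.1 ∧ 1 ≤ x.2 ∧ (q : ℝ) * x.1 ≤ p * x.2} := by
  have hconv : Convex ℝ {x : ℝ × ℝ | 1 ≤ x.1 ∧ 1 ≤ x.2 ∧ (q : ℝ) * x.1 ≤ p * x.2} := by
    have h := convex_halfSpace_le
      (((q : ℝ) • LinearMap.fst ℝ ℝ ℝ - (p : ℝ) • LinearMap.snd ℝ ℝ ℝ).isLinear) 0
    simp only [LinearMap.sub_apply, LinearMap.smul_apply, LinearMap.fst_apply,
      LinearMap.snd_apply, smul_eq_mul, sub_nonpos] at h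
    exact (convex_halfSpace_ge (LinearMap.fst ℝ ℝ ℝ).isLinear 1).inter
      ((convex_halfSpace_ge (LinearMap.snd ℝ ℝ ℝ).isLinear 1).inter h)
  refine convexHull_min ?_ hconv
  rintro _ ⟨a, b, ha, hb, rfl, hcone⟩
  have hpR : (0 : ℝ) < p := by exact_mod_cast hp
  exact ⟨(by exact_mod_cast ha : (1 : ℝ) ≤ a), (by exact_mod_cast hb : (1 : ℝ) ≤ b),
    ((exists_nonneg_cone_coeffs_iff hpR).1 hcone).2⟩

lemma mk_mem_convexHull_latticeConePoints_iff {p q a b : ℤ} (hp : 0 < p) :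
    ((a : ℝ), (b : ℝ)) ∈ convexHull ℝ (latticeConePoints p q) ↔
      0 < a ∧ 0 < b ∧ q * a ≤ p * b := by
  constructor
  · intro h
    obtain ⟨ha, hb, hab⟩ : (1 : ℝ) ≤ a ∧ (1 : ℝ) ≤ b ∧ (q : ℝ) * a ≤ p * b :=
      convexHull_latticeConePoints_subset hp h
    exact ⟨by exact_mod_cast ha, by exact_mod_cast hb, by exact_mod_cast hab⟩
  · rintro ⟨ha, hb, hab⟩
    have hpR : (0 : ℝ) < p := by exact_mod_cast hp
    refine subset_convexHull ℝ _ ⟨a, b, ha, hb, rfl, (exists_nonneg_cone_coeffs_iff hpR).2 ?_⟩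
    exact ⟨by positivity, by exact_mod_cast hab⟩

section Face

variable {p q a₁ b₁ a₂ b₂ : ℤ}

lemma le_of_isExtreme_segment (hp : 0 < p) (hq : 0 ≤ q) (hlt : a₁ < a₂)
    (hface : IsExtreme ℝ (convexHull ℝ (latticeConePoints p q))
      (segment ℝ ((a₁ : ℝ), (b₁ : ℝ)) ((a₂ : ℝ), (b₂ : ℝ)))) :
    b₁ ≤ b₂ := by
  obtain ⟨ha₁, hb₁, hc₁⟩ :=
    (mk_mem_convexHull_latticeConePoints_iff hp).1 (hface.subset (left_mem_segment ℝ _ _))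
  obtain ⟨ha₂, hb₂, hc₂⟩ :=
    (mk_mem_convexHull_latticeConePoints_iff hp).1 (hface.subset (right_mem_segment ℝ _ _))
  by_contra! hb
  have hu : ((a₂ : ℝ), (b₁ : ℝ)) ∈ convexHull ℝ (latticeConePoints p q) :=
    (mk_mem_convexHull_latticeConePoints_iff hp).2 ⟨ha₂, hb₁, by nlinarith⟩
  have hv : ((a₁ : ℝ), (b₂ : ℝ)) ∈ convexHull ℝ (latticeConePoints p q) :=
    (mk_mem_convexHull_latticeConePoints_iff hp).2 ⟨ha₁, hb₂, by nlinarith⟩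
  have hmid_mem : (1 / 2 : ℝ) • ((a₂ : ℝ), (b₁ : ℝ)) + (1 / 2 : ℝ) • ((a₁ : ℝ), (b₂ : ℝ)) ∈
      segment ℝ ((a₁ : ℝ), (b₁ : ℝ)) ((a₂ : ℝ), (b₂ : ℝ)) :=
    ⟨1 / 2, 1 / 2, by norm_num, by norm_num, by norm_num, by ext <;> simp [add_comm]⟩
  have hu_mem := hface.left_mem_of_mem_openSegment hu hv hmid_mem
    ⟨1 / 2, 1 / 2, by norm_num, by norm_num, by norm_num, rfl⟩
  have := Prod.eq_right_of_mem_segment_of_fst_le hu_mem (by simpa using hlt) le_rfl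
  simp only [Prod.mk.injEq, Int.cast_inj] at this
  omega

lemma slope_lt_of_isExtreme_segment (hp : 0 < p) (hq : 0 ≤ q) (hlt : a₁ < a₂)
    (hface : IsExtreme ℝ (convexHull ℝ (latticeConePoints p q))
      (segment ℝ ((a₁ : ℝ), (b₁ : ℝ)) ((a₂ : ℝ), (b₂ : ℝ)))) :
    p * (b₂ - b₁) < q * (a₂ - a₁) := by
  have hx₁ := hface.subset (left_mem_segment ℝ _ _)
  have hx₂ := hface.subset (right_mem_segment ℝ _ _)
  obtain ⟨ha₂, hb₂, hc₂⟩ := (mk_mem_convexHull_latticeConePoints_iff hp).1 hx₂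
  by_contra! h
  have hw := (mk_mem_convexHull_latticeConePoints_iff (q := q) (a := a₂ + p) (b := b₂ + q) hp).2
    ⟨by omega, by omega, by nlinarith⟩
  have hv := (mk_mem_convexHull_latticeConePoints_iff (q := q) (a := a₂) (b := b₂ + 1) hp).2
    ⟨ha₂, by omega, by nlinarith⟩
  push_cast at hw hv
  set d : ℝ := a₂ - a₁
  set D : ℝ := p * (b₂ - b₁) - q * (a₂ - a₁)
  have hd : 0 < d := by simpa [d] using hlt
  have hD : 0 ≤ D := by
    simp only [D, sub_nonneg]
    exact_mod_cast h
  have hpR : (0 : ℝ) < p := by exact_mod_cast hp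
  have hN : 0 < d + D := by positivity
  have hμ : (0 : ℝ) < p / (d + D) := by positivity
  have hz :
      ((a₂ : ℝ), (b₂ : ℝ)) + (p / (d + D)) • (((a₂ : ℝ), (b₂ : ℝ)) - ((a₁ : ℝ), (b₁ : ℝ))) ∈
      segment ℝ ((a₂ : ℝ) + p, (b₂ : ℝ) + q) ((a₂ : ℝ), (b₂ : ℝ) + 1) := by
    refine ⟨d / (d + D), D / (d + D), by positivity, by positivity, by field_simp, ?_⟩
    have := hN.ne'
    ext <;> simp only [Prod.fst_add, Prod.snd_add, Prod.smul_fst, Prod.smul_snd, Prod.fst_sub,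
      Prod.snd_sub, smul_eq_mul] <;> field_simp <;> simp only [d, D] <;> ring
  have hz_mem := hface.right_mem_of_mem_openSegment hx₁
    ((convex_convexHull ℝ _).segment_subset hw hv hz) (right_mem_segment ℝ _ _)
    (mem_openSegment_add_smul_sub hμ)
  have hz_eq :=
    Prod.eq_right_of_mem_segment_of_fst_le hz_mem (by simpa using hlt) (by simp; positivity)
  have : p / (d + D) * d = 0 := by simpa [d] using congrArg Prod.fst hz_eq
  exact (mul_pos hμ hd).ne' this

end Face

theorem stmt_3_general (p q : ℤ) (hq : 3 ≤ q) (hpq : q < p)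
    (Γ : Set (ℝ × ℝ))
    (hΓ : Γ = convexHull ℝ {x : ℝ × ℝ | ∃ a b : ℤ, 0 < a ∧ 0 < b ∧
      x = ((a : ℝ), (b : ℝ)) ∧ ∃ lam mu : ℝ, 0 ≤ lam ∧ 0 ≤ mu ∧
        (a : ℝ) = mu * p ∧ (b : ℝ) = lam + mu * q})
    (a₁ b₁ a₂ b₂ : ℤ) (hle : a₁ ≤ a₂)
    (hface : IsExtreme ℝ Γ (segment ℝ ((a₁ : ℝ), (b₁ : ℝ)) ((a₂ : ℝ), (b₂ : ℝ)))) :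
    0 ≤ ((b₂ : ℝ) - b₁) / ((a₂ : ℝ) - a₁) ∧
      ((b₂ : ℝ) - b₁) / ((a₂ : ℝ) - a₁) < (q : ℝ) / p := by
  subst hΓ
  have hp : 0 < p := by omega
  have hq₀ : 0 ≤ q := by omega
  have hpR : (0 : ℝ) < p := by exact_mod_cast hp
  obtain rfl | hlt := hle.eq_or_lt
  · -- a vertical face has slope `0 / 0 = 0`
    simp only [sub_self, div_zero, le_refl, true_and]
    exact div_pos (by exact_mod_cast (by omega : 0 < q)) hpR
  have hb := le_of_isExtreme_segment hp hq₀ hlt hface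
  have hslope := slope_lt_of_isExtreme_segment hp hq₀ hlt hface
  have hd : (0 : ℝ) < a₂ - a₁ := by exact_mod_cast sub_pos.2 hlt
  refine ⟨div_nonneg (by exact_mod_cast sub_nonneg.2 hb) hd.le, ?_⟩
  rw [div_lt_div_iff₀ hd hpR, mul_comm]
  exact_mod_cast hslope

/-- Slope bound for compact faces of the convex hull Γ of the positive integer points of
the cone generated by (0,1) and (p,q): if (a₁,b₁), (a₂,b₂) with a₁ ≤ a₂ are the vertices
of a compact face of Γ (i.e. the segment joining them is an extreme subset of Γ), then
0 ≤ (b₂−b₁)/(a₂−a₁) < q/p. -/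
theorem stmt_3 (p q : ℤ) (hq : 3 ≤ q) (hpq : q < p) (hcop : IsCoprime p q)
    (Γ : Set (ℝ × ℝ))
    (hΓ : Γ = convexHull ℝ {x : ℝ × ℝ | ∃ a b : ℤ, 0 < a ∧ 0 < b ∧
      x = ((a : ℝ), (b : ℝ)) ∧ ∃ lam mu : ℝ, 0 ≤ lam ∧ 0 ≤ mu ∧
        (a : ℝ) = mu * p ∧ (b : ℝ) = lam + mu * q})
    (a₁ b₁ a₂ b₂ : ℤ) (hle : a₁ ≤ a₂)
    (hne : ((a₁ : ℝ), (b₁ : ℝ)) ≠ ((a₂ : ℝ), (b₂ : ℝ)))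
    (hface : IsExtreme ℝ Γ (segment ℝ ((a₁ : ℝ), (b₁ : ℝ)) ((a₂ : ℝ), (b₂ : ℝ)))) :
    0 ≤ ((b₂ : ℝ) - b₁) / ((a₂ : ℝ) - a₁) ∧
      ((b₂ : ℝ) - b₁) / ((a₂ : ℝ) - a₁) < (q : ℝ) / p :=
  stmt_3_general p q hq hpq Γ hΓ a₁ b₁ a₂ b₂ hle hface
end

section
/- Let K be an algebraically closed field of characteristic zero, p ≥ 2 an integer, and ψ₁, ψ₂, γ ∈ K[[s,t]] with γ invertible, ψ₁, ψ₂ not divisible by t, and suppose t^N γ = J₁^p ψ₁^p + J₂^p ψ₂^p for some N > 0 and invertible J₁, J₂ ∈ K[[s,t]]. Then ψ₁ and ψ₂ are invertible or divisible by t; hence, if both ψ₁ and ψ₂ are non-invertible, a contradiction follows. -/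
/-! Both `ψᵢ` are in fact units. Put `a = J₁ψ₁`, `b = J₂ψ₂`. Modulo the prime `t` we get
`ā ^ p + b̄ ^ p = 0` in a domain, so `ā / b̄` is integral over the algebraically closed field `K`,
i.e. a constant `c` with `c ^ p = -1`. Then `t ^ N γ = a ^ p - (c b) ^ p = S (a - c b)` where
`S = ∑ aⁱ (c b) ^ (p - 1 - i) ≡ p a ^ (p - 1) ≢ 0 mod t`, so `t ^ N ∣ a - c b` and `S` divides the
unit `γ`. But if `a`, `b` were both non-units, so would be `S` (as `p ≥ 2`). Finally `a ^ p + b ^ p`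
is not a unit, so in the local ring `K[[s,t]]` one of `a`, `b` is a unit iff the other one is. -/

open Finset

namespace MvPowerSeries

variable {σ R : Type*}

theorem X_dvd_iff_weightedOrder_ne_zero [Semiring R] [DecidableEq σ] {s : σ}
    {f : MvPowerSeries σ R} : X s ∣ f ↔ f.weightedOrder (Pi.single s 1) ≠ 0 := by
  rw [X_dvd_iff]
  constructor
  · intro h
    refine (Order.one_le_iff_ne_zero).mp (le_weightedOrder _ fun m hm ↦ h m ?_)
    rw [Finsupp.weight_single_one_apply] at hm
    exact Nat.lt_one_iff.mp (by exact_mod_cast hm)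
  · intro h m hm
    apply coeff_eq_zero_of_lt_weightedOrder
    rwa [Finsupp.weight_single_one_apply, hm, Nat.cast_zero, pos_iff_ne_zero]

theorem X_prime [CommRing R] [IsDomain R] (s : σ) : Prime (X s : MvPowerSeries σ R) := by
  classical
  refine ⟨nonZeroDivisors.ne_zero X_mem_nonzeroDivisors, fun h ↦ ?_, fun f g ↦ ?_⟩
  · simpa using (isUnit_iff_constantCoeff.mp h).ne_zero
  · simp only [X_dvd_iff_weightedOrder_ne_zero, weightedOrder_mul, ne_eq, add_eq_zero, not_and_or]
    exact id

end MvPowerSeries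

section

variable {K D : Type*} [Field K] [IsAlgClosed K] [CommRing D] [IsDomain D] [Algebra K D]

theorem IsIntegral.mem_range_algebraMap_of_isAlgClosed {x : D} (hx : IsIntegral K x) :
    x ∈ (algebraMap K D).range := by
  obtain ⟨c, hc⟩ := (IsAlgClosed.algebraMap_bijective_of_isIntegral (k := K)
    (K := integralClosure K D)).2 ⟨x, hx⟩
  exact ⟨c, congrArg Subtype.val hc⟩

theorem exists_eq_algebraMap_mul_of_pow_add_pow_eq_zero {p : ℕ} (hp : p ≠ 0) {x y : D}
    (hy : y ≠ 0) (h : x ^ p + y ^ p = 0) : ∃ c : K, c ^ p = -1 ∧ x = algebraMap K D c * y := by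
  let F := FractionRing D
  have hy' : algebraMap D F y ≠ 0 :=
    IsFractionRing.to_map_ne_zero_of_mem_nonZeroDivisors (mem_nonZeroDivisors_of_ne_zero hy)
  have hz : (algebraMap D F x / algebraMap D F y) ^ p + 1 = 0 := by
    rw [div_pow, div_add_one (pow_ne_zero p hy'), ← map_pow, ← map_pow, ← map_add, h, map_zero,
      zero_div]
  have hint : IsIntegral K (algebraMap D F x / algebraMap D F y) :=
    ⟨Polynomial.X ^ p + 1, Polynomial.monic_X_pow_add_C 1 hp, by simpa using hz⟩
  obtain ⟨c, hc⟩ := hint.mem_range_algebraMap_of_isAlgClosed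
  refine ⟨c, (algebraMap K F).injective ?_, IsFractionRing.injective D F ?_⟩
  · rw [map_pow, hc, map_neg, map_one, eq_neg_iff_add_eq_zero, hz]
  · rw [map_mul, ← IsScalarTower.algebraMap_apply, hc, div_mul_cancel₀ _ hy']

end

section

variable {R : Type*} [CommRing R] {t a b : R} {p : ℕ}

theorem exists_dvd_sub_algebraMap_mul_of_dvd_pow_add_pow {K : Type*} [Field K] [IsAlgClosed K]
    [Algebra K R] (ht : Prime t) (hp : p ≠ 0) (hb : ¬ t ∣ b) (h : t ∣ a ^ p + b ^ p) :
    ∃ c : K, c ^ p = -1 ∧ t ∣ a - algebraMap K R c * b := by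
  have := (Ideal.span_singleton_prime ht.ne_zero).mpr ht
  let mk := Ideal.Quotient.mk (Ideal.span {t})
  obtain ⟨c, hcp, hc⟩ := exists_eq_algebraMap_mul_of_pow_add_pow_eq_zero (K := K) hp
    (x := mk a) (y := mk b) (by rwa [Ne, Ideal.Quotient.eq_zero_iff_dvd])
    (by rwa [← map_pow, ← map_pow, ← map_add, Ideal.Quotient.eq_zero_iff_dvd])
  refine ⟨c, hcp, ?_⟩
  rwa [← Ideal.Quotient.eq_zero_iff_dvd, map_sub, map_mul, Ideal.Quotient.mk_algebraMap,
    sub_eq_zero]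

theorem geom_sum₂_mem {I : Ideal R} (hp : 2 ≤ p) (ha : a ∈ I) (hb : b ∈ I) :
    ∑ i ∈ range p, a ^ i * b ^ (p - 1 - i) ∈ I := by
  refine I.sum_mem fun i hi ↦ ?_
  rcases Nat.eq_zero_or_pos i with rfl | hi0
  · exact I.mul_mem_left _ (I.pow_mem_of_mem hb _ (by omega))
  · exact I.mul_mem_right _ (I.pow_mem_of_mem ha _ hi0)

end

theorem IsLocalRing.isUnit_iff_isUnit_of_not_isUnit_pow_add_pow {R : Type*} [CommRing R]
    [IsLocalRing R] {a b : R} {p : ℕ} (hp : p ≠ 0) (h : ¬ IsUnit (a ^ p + b ^ p)) :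
    IsUnit a ↔ IsUnit b := by
  have key : ∀ x y : R, ¬ IsUnit (x ^ p + y ^ p) → IsUnit x → IsUnit y := by
    intro x y hxy hx
    have : IsUnit (x ^ p + y ^ p + -y ^ p) := by simpa using hx.pow p
    rcases IsLocalRing.isUnit_or_isUnit_of_isUnit_add this with h' | h'
    · exact absurd h' hxy
    · exact (isUnit_pow_iff hp).mp ((IsUnit.neg_iff _).mp h')
  exact ⟨key a b h, key b a (add_comm (a ^ p) _ ▸ h)⟩

section

variable {R : Type*} [CommRing R] [IsDomain R] [IsLocalRing R] {t a b γ : R} {p N : ℕ}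

theorem isUnit_or_isUnit_of_pow_add_pow_eq_prime_pow_mul (K : Type*) [Field K] [IsAlgClosed K]
    [CharZero K] [Algebra K R] (hp : 2 ≤ p) (hN : 0 < N) (ht : Prime t) (ha : ¬ t ∣ a)
    (hb : ¬ t ∣ b) (hγ : IsUnit γ) (h : a ^ p + b ^ p = t ^ N * γ) : IsUnit a ∨ IsUnit b := by
  by_contra! hab
  obtain ⟨c, hcp, hc⟩ := exists_dvd_sub_algebraMap_mul_of_dvd_pow_add_pow (K := K) ht
    (by omega) hb (h ▸ (dvd_pow_self t hN.ne').mul_right γ)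
  set b' := algebraMap K R c * b
  set S := ∑ i ∈ range p, a ^ i * b' ^ (p - 1 - i)
  have hS : S * (a - b') = t ^ N * γ := by
    rw [geom_sum₂_mul, mul_pow, ← map_pow, hcp, map_neg, map_one, neg_one_mul, sub_neg_eq_add, h]
  have hpR : IsUnit (p : R) := by
    simpa using (IsUnit.mk0 (p : K) (by exact_mod_cast (by omega : p ≠ 0))).map (algebraMap K R)
  have htS : ¬ t ∣ S := not_dvd_geom_sum₂ ht hc ha fun h ↦ ht.not_isUnit (isUnit_of_dvd_unit h hpR)
  obtain ⟨d, hd⟩ := ht.pow_dvd_of_dvd_mul_left N htS (by rw [hS]; exact dvd_mul_right _ _)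
  have hγS : γ = S * d := by
    apply mul_left_cancel₀ (pow_ne_zero N ht.ne_zero)
    rw [← hS, hd]; ring
  have hSmem : S ∈ IsLocalRing.maximalIdeal R := by
    refine geom_sum₂_mem hp hab.1 ?_
    exact (IsLocalRing.maximalIdeal R).mul_mem_left _ hab.2
  exact hSmem (isUnit_of_mul_isUnit_left (hγS ▸ hγ))

theorem isUnit_and_isUnit_of_pow_add_pow_eq_prime_pow_mul (K : Type*) [Field K] [IsAlgClosed K]
    [CharZero K] [Algebra K R] (hp : 2 ≤ p) (hN : 0 < N) (ht : Prime t) (ha : ¬ t ∣ a)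
    (hb : ¬ t ∣ b) (hγ : IsUnit γ) (h : a ^ p + b ^ p = t ^ N * γ) : IsUnit a ∧ IsUnit b := by
  have hsum : ¬ IsUnit (a ^ p + b ^ p) := by
    rw [h, IsUnit.mul_iff, isUnit_pow_iff hN.ne']
    exact fun h' ↦ ht.not_isUnit h'.1
  have hab := IsLocalRing.isUnit_iff_isUnit_of_not_isUnit_pow_add_pow (by omega) hsum
  rcases isUnit_or_isUnit_of_pow_add_pow_eq_prime_pow_mul K hp hN ht ha hb hγ h with h' | h'
  · exact ⟨h', hab.mp h'⟩
  · exact ⟨hab.mpr h', h'⟩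

end

/-- If t^N γ = J₁^p ψ₁^p + J₂^p ψ₂^p with γ, J₁, J₂ units, N > 0 and ψ₁, ψ₂ not
divisible by t, then ψ₁ and ψ₂ are invertible or divisible by t. -/
theorem stmt_6 {K : Type*} [Field K] [IsAlgClosed K] [CharZero K]
    (p : ℕ) (hp : 2 ≤ p) (N : ℕ) (hN : 0 < N)
    (ψ₁ ψ₂ γ J₁ J₂ : MvPowerSeries (Fin 2) K)
    (hγ : IsUnit γ) (hJ₁ : IsUnit J₁) (hJ₂ : IsUnit J₂)
    (h₁ : ¬ (MvPowerSeries.X 1 : MvPowerSeries (Fin 2) K) ∣ ψ₁)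
    (h₂ : ¬ (MvPowerSeries.X 1 : MvPowerSeries (Fin 2) K) ∣ ψ₂)
    (heq : (MvPowerSeries.X 1 : MvPowerSeries (Fin 2) K) ^ N * γ =
      J₁ ^ p * ψ₁ ^ p + J₂ ^ p * ψ₂ ^ p) :
    (IsUnit ψ₁ ∨ (MvPowerSeries.X 1 : MvPowerSeries (Fin 2) K) ∣ ψ₁) ∧
    (IsUnit ψ₂ ∨ (MvPowerSeries.X 1 : MvPowerSeries (Fin 2) K) ∣ ψ₂) ∧
    (¬ IsUnit ψ₁ → ¬ IsUnit ψ₂ → False) := by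
  have : IsDomain (MvPowerSeries (Fin 2) K) := NoZeroDivisors.to_isDomain _
  obtain ⟨hu₁, hu₂⟩ := isUnit_and_isUnit_of_pow_add_pow_eq_prime_pow_mul K hp hN
    (MvPowerSeries.X_prime 1) (a := ψ₁ * J₁) (b := ψ₂ * J₂)
    (by rwa [hJ₁.dvd_mul_right]) (by rwa [hJ₂.dvd_mul_right]) hγ
    (by rw [heq, mul_pow, mul_pow, mul_comm (ψ₁ ^ p), mul_comm (ψ₂ ^ p)])
  have hψ₁ := isUnit_of_mul_isUnit_left hu₁
  have hψ₂ := isUnit_of_mul_isUnit_left hu₂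
  exact ⟨.inl hψ₁, .inl hψ₂, fun h _ ↦ h hψ₁⟩
end

section
/- Let k ≥ 2 and n = 2k. The minimal generating system of the semigroup τ₁ ∩ ℤ³, where τ₁ is the cone in ℝ³ generated by (1,0,0) and (n−1, n−2, 2), is {(1,0,0), (k, k−1, 1), (n−1, n−2, 2)}. -/
/-- For n = 2k, k ≥ 2, the minimal generating system of the semigroup τ₁ ∩ ℤ³, where τ₁
is the cone generated by (1,0,0) and (n−1, n−2, 2), is
{(1,0,0), (k, k−1, 1), (n−1, n−2, 2)}. -/
theorem stmt_14 (k n : ℤ) (hk : 2 ≤ k) (hn : n = 2 * k) :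
    let S : Set (ℤ × ℤ × ℤ) := {v | ∃ lam mu : ℝ, 0 ≤ lam ∧ 0 ≤ mu ∧
      (v.1 : ℝ) = lam + mu * ((n : ℝ) - 1) ∧ (v.2.1 : ℝ) = mu * ((n : ℝ) - 2) ∧
      (v.2.2 : ℝ) = mu * 2}
    let G : Set (ℤ × ℤ × ℤ) := {(1, 0, 0), (k, k - 1, 1), (n - 1, n - 2, 2)}
    G ⊆ S ∧ (∀ v ∈ S, v ∈ AddSubmonoid.closure G) ∧
      (∀ g ∈ G, g ∉ AddSubmonoid.closure (G \ {g})) := by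
  subst hn
  intro S G
  have hg1 : ((1:ℤ), (0:ℤ), (0:ℤ)) ∈ G := by left; rfl
  have hg2 : ((k:ℤ), k - 1, (1:ℤ)) ∈ G := by right; left; rfl
  have hg3 : ((2*k - 1:ℤ), 2*k - 2, (2:ℤ)) ∈ G := by right; right; rfl
  refine ⟨?_, ?_, ?_⟩
  · -- G ⊆ S
    intro v hv
    rcases hv with rfl | rfl | rfl
    · exact ⟨1, 0, by norm_num, le_refl 0, by push_cast; ring, by push_cast; ring,
        by push_cast; ring⟩
    · refine ⟨1/2, 1/2, by norm_num, by norm_num, ?_, ?_, ?_⟩ <;> push_cast <;> ring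
    · exact ⟨0, 1, le_refl 0, by norm_num, by push_cast; ring, by push_cast; ring,
        by push_cast; ring⟩
  · -- S generates
    rintro ⟨a, b, c⟩ ⟨lam, mu, hl, hm, h1, h2, h3⟩
    simp only at h1 h2 h3
    push_cast at h1 h2 h3
    have hc0 : (0:ℤ) ≤ c := by
      have : (0:ℝ) ≤ (c:ℝ) := by rw [h3]; linarith
      exact_mod_cast this
    have hb : 2*b = c*(2*k-2) := by
      have : ((2*b : ℤ) : ℝ) = ((c*(2*k-2) : ℤ) : ℝ) := by
        push_cast; rw [h2, h3]; ring
      exact_mod_cast this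
    have ha : c*(2*k-1) ≤ 2*a := by
      have : ((c*(2*k-1) : ℤ) : ℝ) ≤ ((2*a : ℤ) : ℝ) := by
        push_cast; rw [h1, h3]; nlinarith
      exact_mod_cast this
    rcases Int.even_or_odd c with ⟨m, hcm⟩ | ⟨m, hcm⟩
    · -- c = 2m
      have hm0 : 0 ≤ m := by omega
      have hp0 : 0 ≤ a - m*(2*k-1) := by nlinarith
      have hbm : b = m*(2*k-2) := by nlinarith
      set p := (a - m*(2*k-1)).toNat with hpdef
      set q := m.toNat with hqdef
      have hp : (p:ℤ) = a - m*(2*k-1) := Int.toNat_of_nonneg hp0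
      have hq : (q:ℤ) = m := Int.toNat_of_nonneg hm0
      have hveq : ((a,b,c) : ℤ×ℤ×ℤ) = p • ((1:ℤ),(0:ℤ),(0:ℤ)) + q • ((2*k-1:ℤ), 2*k-2, (2:ℤ)) := by
        simp only [Prod.smul_mk, Prod.mk_add_mk, Prod.mk.injEq, nsmul_eq_mul]
        refine ⟨by rw [hp, hq]; ring, by rw [hp, hq]; linarith [hbm], by rw [hq]; omega⟩
      rw [hveq]
      exact add_mem (AddSubmonoid.nsmul_mem _ (AddSubmonoid.subset_closure hg1) p)
        (AddSubmonoid.nsmul_mem _ (AddSubmonoid.subset_closure hg3) q)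
    · -- c = 2m + 1
      have hm0 : 0 ≤ m := by omega
      have hp0 : 0 ≤ a - k - m*(2*k-1) := by nlinarith
      have hbm : b = (k-1) + m*(2*k-2) := by nlinarith
      set p := (a - k - m*(2*k-1)).toNat with hpdef
      set q := m.toNat with hqdef
      have hp : (p:ℤ) = a - k - m*(2*k-1) := Int.toNat_of_nonneg hp0
      have hq : (q:ℤ) = m := Int.toNat_of_nonneg hm0
      have hveq : ((a,b,c) : ℤ×ℤ×ℤ) = p • ((1:ℤ),(0:ℤ),(0:ℤ)) + ((k:ℤ), k-1, (1:ℤ))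
          + q • ((2*k-1:ℤ), 2*k-2, (2:ℤ)) := by
        simp only [Prod.smul_mk, Prod.mk_add_mk, Prod.mk.injEq, nsmul_eq_mul]
        refine ⟨by rw [hp, hq]; ring, by rw [hp, hq]; linarith [hbm], by rw [hq]; omega⟩
      rw [hveq]
      exact add_mem (add_mem (AddSubmonoid.nsmul_mem _ (AddSubmonoid.subset_closure hg1) p)
        (AddSubmonoid.subset_closure hg2))
        (AddSubmonoid.nsmul_mem _ (AddSubmonoid.subset_closure hg3) q)
  · -- minimality
    intro g hg
    rcases hg with rfl | rfl | rfl
    · -- (1,0,0)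
      intro hmem
      set M : AddSubmonoid (ℤ×ℤ×ℤ) :=
        { carrier := {v | 0 < v.2.2 ∨ v = 0}
          zero_mem' := Or.inr rfl
          add_mem' := by
            rintro x y (hx | rfl) (hy | rfl)
            · left; simp only [Prod.snd_add]; omega
            · left; simpa using hx
            · left; simpa using hy
            · right; simp } with hM
      have hle : AddSubmonoid.closure (G \ {((1:ℤ),(0:ℤ),(0:ℤ))}) ≤ M := by
        rw [AddSubmonoid.closure_le]
        rintro v ⟨hv, hne⟩
        rcases hv with rfl | rfl | rfl
        · exact absurd rfl hne
        · left; norm_num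
        · left; norm_num
      have h : (0:ℤ) < ((1:ℤ),(0:ℤ),(0:ℤ)).2.2 ∨ ((1:ℤ),(0:ℤ),(0:ℤ)) = (0:ℤ×ℤ×ℤ) :=
        hle hmem
      rcases h with h | h
      · norm_num at h
      · simp [Prod.ext_iff] at h
    · -- (k, k-1, 1)
      intro hmem
      set M : AddSubmonoid (ℤ×ℤ×ℤ) :=
        { carrier := {v | Even v.2.2}
          zero_mem' := Even.zero
          add_mem' := fun hx hy => hx.add hy } with hM
      have hle : AddSubmonoid.closure (G \ {((k:ℤ), k-1, (1:ℤ))}) ≤ M := by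
        rw [AddSubmonoid.closure_le]
        rintro v ⟨hv, hne⟩
        rcases hv with rfl | rfl | rfl
        · exact Even.zero
        · exact absurd rfl hne
        · exact ⟨1, rfl⟩
      have h : Even ((1:ℤ)) := hle hmem
      norm_num at h
    · -- (2k-1, 2k-2, 2)
      intro hmem
      set M : AddSubmonoid (ℤ×ℤ×ℤ) :=
        { carrier := {v | k * v.2.2 ≤ v.1}
          zero_mem' := by simp
          add_mem' := by
            intro x y hx hy
            simp only [Set.mem_setOf_eq, Prod.fst_add, Prod.snd_add] at *
            nlinarith } with hM
      have hle : AddSubmonoid.closure (G \ {((2*k-1:ℤ), 2*k-2, (2:ℤ))}) ≤ M := by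
        rw [AddSubmonoid.closure_le]
        rintro v ⟨hv, hne⟩
        rcases hv with rfl | rfl | rfl
        · show k * (0:ℤ) ≤ 1; simp
        · show k * (1:ℤ) ≤ k; simp
        · exact absurd rfl hne
      have h : k * 2 ≤ 2*k - 1 := hle hmem
      omega
end

section
/- Let p > q ≥ 3 be coprime integers and let (ηₓ, η_z) be an integer point of the cone τ'' generated by (0,1) and (p,q) with ηₓ ≤ μₓ and η_z ≤ μ_z, where (μₓ, μ_z) is a point of the minimal generating system of the semigroup of the cone generated by (0,1) and (p,q) in ℤ². Then (ηₓ, η_z) belongs to the convex hull Γ of the positive integer points of the cone generated by (0,1) and (μₓ, μ_z). -/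
/-- If (ηx,ηz) is a positive integer point of the cone generated by (0,1) and (p,q),
with ηx ≤ μx, ηz ≤ μz, where (μx,μz) belongs to the minimal generating system of the
semigroup of that cone, then (ηx,ηz) belongs to the convex hull Γ of the positive
integer points of the cone generated by (0,1) and (μx,μz). -/
theorem stmt_18 (p q μx μz ηx ηz : ℤ) (hq : 3 ≤ q) (hpq : q < p) (hcop : IsCoprime p q)
    (hηx : 0 < ηx) (hηz : 0 < ηz)
    (hη : ∃ lam mu : ℝ, 0 ≤ lam ∧ 0 ≤ mu ∧ (ηx : ℝ) = mu * p ∧ (ηz : ℝ) = lam + mu * q)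
    (hle1 : ηx ≤ μx) (hle2 : ηz ≤ μz)
    (hμS : ∃ lam mu : ℝ, 0 ≤ lam ∧ 0 ≤ mu ∧ (μx : ℝ) = mu * p ∧ (μz : ℝ) = lam + mu * q)
    (hμmin : ∀ u w : ℤ × ℤ,
      (∃ lam mu : ℝ, 0 ≤ lam ∧ 0 ≤ mu ∧ (u.1 : ℝ) = mu * p ∧ (u.2 : ℝ) = lam + mu * q) →
      (∃ lam mu : ℝ, 0 ≤ lam ∧ 0 ≤ mu ∧ (w.1 : ℝ) = mu * p ∧ (w.2 : ℝ) = lam + mu * q) →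
      u ≠ 0 → w ≠ 0 → u + w ≠ (μx, μz)) :
    ((ηx : ℝ), (ηz : ℝ)) ∈ convexHull ℝ {x : ℝ × ℝ | ∃ a b : ℤ, 0 < a ∧ 0 < b ∧
      x = ((a : ℝ), (b : ℝ)) ∧ ∃ lam mu : ℝ, 0 ≤ lam ∧ 0 ≤ mu ∧
        (a : ℝ) = mu * μx ∧ (b : ℝ) = lam + mu * μz} := by
  have hp : (0:ℤ) < p := by linarith
  have hpR : (0:ℝ) < (p:ℝ) := by exact_mod_cast hp
  have hμx : 0 < μx := lt_of_lt_of_le hηx hle1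
  have hμxR : (0:ℝ) < (μx:ℝ) := by exact_mod_cast hμx
  -- η is in the big cone: q*ηx ≤ p*ηz
  have hηcone : q * ηx ≤ p * ηz := by
    obtain ⟨lam, mu, hlam, hmu, hx, hz⟩ := hη
    have : (q:ℝ) * ηx ≤ (p:ℝ) * ηz := by
      rw [hx, hz]; nlinarith
    exact_mod_cast this
  -- key inequality: ηx * μz ≤ ηz * μx
  have hkey : ηx * μz ≤ ηz * μx := by
    by_cases heq : ηx = μx ∧ ηz = μz
    · rw [heq.1, heq.2]; ring_nf; exact le_refl _
    · -- μ - η ≠ 0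
      by_cases hcone2 : q * (μx - ηx) ≤ p * (μz - ηz)
      · -- μ - η is in the cone: contradiction with minimality
        exfalso
        have hne1 : ((ηx, ηz) : ℤ × ℤ) ≠ 0 := by
          intro h
          have := congrArg Prod.fst h
          simp at this
          omega
        have hne2 : ((μx - ηx, μz - ηz) : ℤ × ℤ) ≠ 0 := by
          intro h
          have h1 := congrArg Prod.fst h
          have h2 := congrArg Prod.snd h
          simp at h1 h2
          exact heq ⟨by omega, by omega⟩
        refine hμmin (ηx, ηz) (μx - ηx, μz - ηz) hη ?_ hne1 hne2 ?_
        · refine ⟨((μz - ηz : ℤ) : ℝ) - ((μx - ηx : ℤ) : ℝ) / p * q,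
            ((μx - ηx : ℤ) : ℝ) / p, ?_, ?_, ?_, ?_⟩
          · have hc : ((q:ℝ) * ((μx:ℝ) - ηx)) ≤ (p:ℝ) * ((μz:ℝ) - ηz) := by
              exact_mod_cast hcone2
            rw [div_mul_eq_mul_div, sub_nonneg, div_le_iff₀ hpR]
            push_cast; nlinarith
          · apply div_nonneg _ hpR.le
            push_cast
            have : (ηx:ℝ) ≤ μx := by exact_mod_cast hle1
            linarith
          · push_cast
            field_simp
          · push_cast; ring
        · simp [Prod.ext_iff]
      · -- μ - η below the big cone: derive hkey arithmetically
        push_neg at hcone2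
        nlinarith [mul_le_mul_of_nonneg_left hcone2.le hηx.le,
          mul_nonneg (sub_nonneg.2 hle1) (sub_nonneg.2 hηcone)]
  -- now exhibit membership in the set itself
  apply subset_convexHull
  refine ⟨ηx, ηz, hηx, hηz, rfl,
    (ηz:ℝ) - (ηx:ℝ) / μx * μz, (ηx:ℝ) / μx, ?_, ?_, ?_, ?_⟩
  · rw [div_mul_eq_mul_div, sub_nonneg, div_le_iff₀ hμxR]
    have : ((ηx * μz : ℤ) : ℝ) ≤ ((ηz * μx : ℤ) : ℝ) := by exact_mod_cast hkey
    push_cast at this; linarith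
  · positivity
  · field_simp
  · ring
end
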